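/- arXiv:1708.00245 — 4 statements merged into one kernel-verified Lean document; each statement's English description precedes it below -/
import Mathlib

section
/- Let P(x,y) = -((1+x^2)y + x^3)^5 and Q(x,y) = y^2(y^2+x^3). For every point (x,y) with y ≥ 1 and y^2 + x^3 > 0, one has -1 ≤ Q(x,y)/P(x,y) ≤ 0 (equivalently, 0 ≤ Q(x,y) ≤ -P(x,y)). -/
/-!
Write `A = (1 + x²)y + x³ = y + s` with `s = x²(x + y)`. The hypothesis `y² + x³ > 0` with `y ≥ 1`
forces `x + y ≥ 0`, so `s ≥ 0` and `x³ ≤ s`. Hence `Q = y²(y² + x³) ≤ y²(y² + s) ≤ (y + s)⁴ ≤ A⁵`,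
the last two steps because `y ≥ 1`.
-/

lemma add_nonneg_of_one_le_of_sq_add_cube_pos {x y : ℝ} (hy : 1 ≤ y) (hpos : 0 < y ^ 2 + x ^ 3) :
    0 ≤ x + y := by
  by_contra! h
  nlinarith [sq_nonneg (x + y), sq_nonneg (x - y)]

lemma sq_mul_sq_add_le_add_pow_five {y s : ℝ} (hy : 1 ≤ y) (hs : 0 ≤ s) :
    y ^ 2 * (y ^ 2 + s) ≤ (y + s) ^ 5 :=
  calc y ^ 2 * (y ^ 2 + s) ≤ (y + s) ^ 4 := by
        nlinarith [mul_nonneg (mul_nonneg (sq_nonneg y) hs) (by linarith : (0 : ℝ) ≤ 4 * y - 1),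
          mul_nonneg (mul_nonneg (sq_nonneg y) (sq_nonneg s)) (by norm_num : (0 : ℝ) ≤ 6),
          mul_nonneg (mul_nonneg (by linarith : (0 : ℝ) ≤ y) hs) (sq_nonneg s),
          pow_nonneg hs 4]
    _ ≤ (y + s) ^ 5 := pow_le_pow_right₀ (by linarith) (by norm_num)

lemma neg_one_le_div_neg_and_div_neg_nonpos {𝕜 : Type*} [Field 𝕜] [LinearOrder 𝕜]
    [IsStrictOrderedRing 𝕜] {q p : 𝕜} (hq : 0 ≤ q) (hqp : q ≤ p) :
    -1 ≤ q / -p ∧ q / -p ≤ 0 := by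
  rw [div_neg]
  exact ⟨neg_le_neg (div_le_one_of_le₀ hqp (hq.trans hqp)),
    neg_nonpos.mpr (div_nonneg hq (hq.trans hqp))⟩

/-- For `P(x,y) = -((1+x^2)y + x^3)^5` and `Q(x,y) = y^2(y^2+x^3)`, on the region
`y ≥ 1`, `y^2 + x^3 > 0` we have `-1 ≤ Q/P ≤ 0`, equivalently `0 ≤ Q ≤ -P`. -/
theorem stmt_1 (x y : ℝ) (hy : 1 ≤ y) (hpos : 0 < y ^ 2 + x ^ 3) :
    0 ≤ y ^ 2 * (y ^ 2 + x ^ 3) ∧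
      y ^ 2 * (y ^ 2 + x ^ 3) ≤ -(-(((1 + x ^ 2) * y + x ^ 3) ^ 5)) ∧
      -1 ≤ y ^ 2 * (y ^ 2 + x ^ 3) / (-(((1 + x ^ 2) * y + x ^ 3) ^ 5)) ∧
      y ^ 2 * (y ^ 2 + x ^ 3) / (-(((1 + x ^ 2) * y + x ^ 3) ^ 5)) ≤ 0 := by
  have hxy := add_nonneg_of_one_le_of_sq_add_cube_pos hy hpos
  have hQ : 0 ≤ y ^ 2 * (y ^ 2 + x ^ 3) := by positivity
  have hQA : y ^ 2 * (y ^ 2 + x ^ 3) ≤ ((1 + x ^ 2) * y + x ^ 3) ^ 5 :=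
    calc y ^ 2 * (y ^ 2 + x ^ 3) ≤ y ^ 2 * (y ^ 2 + x ^ 2 * (x + y)) := by
          gcongr; nlinarith [mul_nonneg (sq_nonneg x) (by linarith : (0 : ℝ) ≤ y)]
      _ ≤ (y + x ^ 2 * (x + y)) ^ 5 := sq_mul_sq_add_le_add_pow_five hy (by positivity)
      _ = ((1 + x ^ 2) * y + x ^ 3) ^ 5 := by ring
  rw [neg_neg]
  exact ⟨hQ, hQA, neg_one_le_div_neg_and_div_neg_nonpos hQ hQA⟩
end

section
/- For all real x ≤ 0 and y ≥ 1 with y ≥ -x and y^2 + x^3 > 0, one has y^2(y^2 + x^3) ≤ (y + y x^2 + x^3)^5. -/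
theorem stmt_3_general (x y : ℝ) (hx : x ≤ 0) (hy : 1 ≤ y) (hxy : -x ≤ y) :
    y ^ 2 * (y ^ 2 + x ^ 3) ≤ (y + y * x ^ 2 + x ^ 3) ^ 5 := by
  have hx3 : x ^ 3 ≤ 0 := Odd.pow_nonpos (by decide) hx
  have hcubic : 0 ≤ y * x ^ 2 + x ^ 3 := by
    have : y * x ^ 2 + x ^ 3 = x ^ 2 * (y + x) := by ring
    rw [this]
    exact mul_nonneg (sq_nonneg x) (by linarith)
  calc y ^ 2 * (y ^ 2 + x ^ 3) ≤ y ^ 2 * y ^ 2 := by gcongr; linarith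
    _ = y ^ 4 := by ring
    _ ≤ y ^ 5 := pow_le_pow_right₀ hy (by norm_num)
    _ ≤ (y + y * x ^ 2 + x ^ 3) ^ 5 := by gcongr; linarith

/-- For all real `x ≤ 0`, `y ≥ 1` with `y ≥ -x` and `y^2 + x^3 > 0`, one has
`y^2(y^2+x^3) ≤ (y + y x^2 + x^3)^5`. -/
theorem stmt_3 (x y : ℝ) (hx : x ≤ 0) (hy : 1 ≤ y) (hxy : -x ≤ y)
    (hpos : 0 < y ^ 2 + x ^ 3) :
    y ^ 2 * (y ^ 2 + x ^ 3) ≤ (y + y * x ^ 2 + x ^ 3) ^ 5 :=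
  stmt_3_general x y hx hy hxy
end

section
/- For all real x with -1/8 ≤ x ≤ 0 and all real y with y ≥ -2x, one has y + x^3/(1+x^2) ≤ 2(y - (-x)^{3/2}). -/
/-- For `-1/8 ≤ x ≤ 0` and `y ≥ -2x`:
`y + x^3/(1+x^2) ≤ 2(y - (-x)^{3/2})`. -/
theorem stmt_5 (x y : ℝ) (hx1 : -(1/8 : ℝ) ≤ x) (hx2 : x ≤ 0) (hy : -2 * x ≤ y) :
    y + x ^ 3 / (1 + x ^ 2) ≤ 2 * (y - (-x) ^ ((3 : ℝ) / 2)) := by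
  have hpow : (-x) ^ ((3 : ℝ) / 2) ≤ -x :=
    Real.rpow_le_self_of_le_one (by linarith) (by linarith) (by norm_num)
  have hfrac : x ^ 3 / (1 + x ^ 2) ≤ 0 :=
    div_nonpos_of_nonpos_of_nonneg (Odd.pow_nonpos (by decide) hx2) (by positivity)
  linarith
end

section
/- Let Φ be a flow on ℝ² for which the origin is a global attractor. Then the union of all homoclinic orbits of Φ is a bounded subset of ℝ². -/
/-- A (continuous) flow on the plane. -/
def IsFlow (Φ : ℝ → ℝ × ℝ → ℝ × ℝ) : Prop :=
  Continuous (fun p : ℝ × (ℝ × ℝ) => Φ p.1 p.2) ∧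
  (∀ z, Φ 0 z = z) ∧ (∀ s t z, Φ (s + t) z = Φ s (Φ t z))

/-- The orbit of a point. -/
def orb (Φ : ℝ → ℝ × ℝ → ℝ × ℝ) (z : ℝ × ℝ) : Set (ℝ × ℝ) :=
  Set.range fun t => Φ t z

/-- The ω-limit set of a point. -/
def omegaLim (Φ : ℝ → ℝ × ℝ → ℝ × ℝ) (z : ℝ × ℝ) : Set (ℝ × ℝ) :=
  {u | ∃ t : ℕ → ℝ, Filter.Tendsto t Filter.atTop Filter.atTop ∧
    Filter.Tendsto (fun n => Φ (t n) z) Filter.atTop (nhds u)}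

/-- The α-limit set of a point. -/
def alphaLim (Φ : ℝ → ℝ × ℝ → ℝ × ℝ) (z : ℝ × ℝ) : Set (ℝ × ℝ) :=
  {u | ∃ t : ℕ → ℝ, Filter.Tendsto t Filter.atTop Filter.atBot ∧
    Filter.Tendsto (fun n => Φ (t n) z) Filter.atTop (nhds u)}

/-- The origin is a global attractor: every ω-limit set is `{0}`. -/
def GlobalAttractor (Φ : ℝ → ℝ × ℝ → ℝ × ℝ) : Prop :=
  ∀ z, omegaLim Φ z = {0}

/-- A point (and its orbit) is homoclinic: ω-limit and α-limit both `{0}`. -/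
def Homoclinic (Φ : ℝ → ℝ × ℝ → ℝ × ℝ) (z : ℝ × ℝ) : Prop :=
  omegaLim Φ z = {0} ∧ alphaLim Φ z = {0}

/-- `enclosed Γ` : the orbit `Γ`, the origin, and all bounded complementary
components of `Γ ∪ {0}`; for a regular homoclinic orbit this is the closed disk
`E(Γ)` bounded by the Jordan curve `Γ ∪ {0}`. -/
def enclosed (Γ : Set (ℝ × ℝ)) : Set (ℝ × ℝ) :=
  (Γ ∪ {0}) ∪ {p | Bornology.IsBounded (connectedComponentIn (Γ ∪ {0})ᶜ p)}

/-! A compactness argument gives a time `T` within which every point of the closed unit disk `D`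
comes back to `D`, since its ω-limit set is `{0}`. A point `p` of a homoclinic orbit has its past
in `D`, because its α-limit set is `{0}`. If `a` is the point of its orbit where it leaves `D`
for the last time before reaching `p`, then the return of `a` to `D` must happen after `p`, so
`p = Φ t a` with `0 ≤ t ≤ T`. Hence all homoclinic orbits lie in the compact set
`Φ ([0, T] × D)`. -/

open Function Set Filter Topology Metric

theorem IsClosed.exists_mem_Icc_forall_mem_Ioc_notMem {α : Type*} [LinearOrder α]
    [TopologicalSpace α] [ClosedIciTopology α] [CompactIccSpace α] {C : Set α} (hC : IsClosed C)
    {s b : α} (hs : s ∈ C) (hsb : s ≤ b) :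
    ∃ r ∈ Icc s b, r ∈ C ∧ ∀ u ∈ Ioc r b, u ∉ C := by
  obtain ⟨r, ⟨hrC, hr⟩, hmax⟩ :=
    (isCompact_Icc.inter_left hC).exists_isGreatest ⟨s, hs, left_mem_Icc.2 hsb⟩
  exact ⟨r, hr, hrC, fun u hu huC =>
    hu.1.not_ge (hmax ⟨huC, hr.1.trans hu.1.le, hu.2⟩)⟩

theorem IsCompact.exists_forall_exists_mem_Ioc_apply_mem {X Y : Type*} [TopologicalSpace X]
    [TopologicalSpace Y] {f : ℝ → X → Y} (hf : ∀ t, Continuous (f t)) {K : Set X}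
    (hK : IsCompact K) {U : Set Y} (hU : IsOpen U) (h : ∀ x ∈ K, ∃ t > 0, f t x ∈ U) :
    ∃ T, ∀ x ∈ K, ∃ t ∈ Ioc 0 T, f t x ∈ U := by
  let V : ℕ → Set X := fun n => ⋃ t ∈ Ioc (0 : ℝ) n, f t ⁻¹' U
  have hV_open : ∀ n, IsOpen (V n) := fun n => isOpen_biUnion fun t _ => hU.preimage (hf t)
  have hV_mono : Monotone V := fun m n hmn =>
    biUnion_subset_biUnion_left (Ioc_subset_Ioc_right (Nat.cast_le.2 hmn))
  have hK_cover : K ⊆ ⋃ n, V n := by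
    intro x hx
    obtain ⟨t, ht, hxt⟩ := h x hx
    obtain ⟨n, hn⟩ := exists_nat_ge t
    exact mem_iUnion.2 ⟨n, mem_biUnion ⟨ht, hn⟩ hxt⟩
  obtain ⟨n, hn⟩ := hK.elim_directed_cover V hV_open hK_cover hV_mono.directed_le
  exact ⟨n, fun x hx => by simpa only [V, mem_iUnion₂, mem_preimage, exists_prop] using hn hx⟩

theorem Flow.mem_image_Icc_prod_of_apply_mem {α : Type*} [TopologicalSpace α] (ϕ : Flow ℝ α)
    {K : Set α} (hK : IsClosed K) {T : ℝ} (hT : ∀ a ∈ K, ∃ t ∈ Ioc 0 T, ϕ t a ∈ K) {p : α}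
    {s : ℝ} (hs : s ≤ 0) (hps : ϕ s p ∈ K) :
    p ∈ uncurry ϕ '' (Icc 0 T ×ˢ K) := by
  have hcont : Continuous fun u => ϕ u p := ϕ.continuous continuous_id continuous_const
  obtain ⟨r, ⟨-, hr⟩, hrK, hlast⟩ :=
    (hK.preimage hcont).exists_mem_Icc_forall_mem_Ioc_notMem hps hs
  obtain ⟨t, ⟨ht, htT⟩, htK⟩ := hT _ hrK
  have hpast : 0 < t + r := by
    by_contra! h
    exact hlast (t + r) ⟨by linarith, h⟩ (by rwa [mem_preimage, ϕ.map_add])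
  refine ⟨(-r, ϕ r p), ⟨⟨by linarith, by linarith⟩, hrK⟩, ?_⟩
  simp [← ϕ.map_add]

theorem exists_gt_apply_mem_of_mem_omegaLim {Φ : ℝ → ℝ × ℝ → ℝ × ℝ} {z u : ℝ × ℝ}
    (hu : u ∈ omegaLim Φ z) {U : Set (ℝ × ℝ)} (hU : U ∈ 𝓝 u) (θ : ℝ) : ∃ t > θ, Φ t z ∈ U := by
  obtain ⟨t, ht, hlim⟩ := hu
  obtain ⟨n, hn, hnU⟩ := ((ht.eventually_gt_atTop θ).and (hlim hU)).exists
  exact ⟨t n, hn, hnU⟩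

theorem exists_lt_apply_mem_of_mem_alphaLim {Φ : ℝ → ℝ × ℝ → ℝ × ℝ} {z u : ℝ × ℝ}
    (hu : u ∈ alphaLim Φ z) {U : Set (ℝ × ℝ)} (hU : U ∈ 𝓝 u) (θ : ℝ) : ∃ t < θ, Φ t z ∈ U := by
  obtain ⟨t, ht, hlim⟩ := hu
  obtain ⟨n, hn, hnU⟩ := ((ht.eventually_lt_atBot θ).and (hlim hU)).exists
  exact ⟨t n, hn, hnU⟩

namespace IsFlow

variable {Φ : ℝ → ℝ × ℝ → ℝ × ℝ}

def toFlow (hΦ : IsFlow Φ) : Flow ℝ (ℝ × ℝ) where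
  toFun := Φ
  cont' := hΦ.1
  map_add' := hΦ.2.2
  map_zero' := hΦ.2.1

theorem exists_return_time_closedBall (hΦ : IsFlow Φ) (hattr : GlobalAttractor Φ) {ε : ℝ}
    (hε : 0 < ε) : ∃ T, ∀ a ∈ closedBall (0 : ℝ × ℝ) ε, ∃ t ∈ Ioc 0 T, Φ t a ∈ closedBall 0 ε := by
  have hreturn : ∀ a ∈ closedBall (0 : ℝ × ℝ) ε, ∃ t > 0, Φ t a ∈ ball 0 ε := fun a _ =>
    exists_gt_apply_mem_of_mem_omegaLim ((hattr a).ge (mem_singleton 0)) (ball_mem_nhds 0 hε) 0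
  obtain ⟨T, hT⟩ := (isCompact_closedBall 0 ε).exists_forall_exists_mem_Ioc_apply_mem
    hΦ.toFlow.continuous_toFun isOpen_ball hreturn
  exact ⟨T, fun a ha => (hT a ha).imp fun _ ⟨ht, hta⟩ => ⟨ht, ball_subset_closedBall hta⟩⟩

end IsFlow

/-- The union of all homoclinic orbits of a plane flow with the origin as a
global attractor is bounded. -/
theorem stmt_11 (Φ : ℝ → ℝ × ℝ → ℝ × ℝ) (hΦ : IsFlow Φ)
    (hattr : GlobalAttractor Φ) :
    Bornology.IsBounded (⋃ z ∈ {z | Homoclinic Φ z}, orb Φ z) := by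
  obtain ⟨T, hT⟩ := hΦ.exists_return_time_closedBall hattr one_pos
  have hcompact : IsCompact (uncurry hΦ.toFlow '' (Icc 0 T ×ˢ closedBall 0 1)) :=
    (isCompact_Icc.prod (isCompact_closedBall 0 1)).image hΦ.toFlow.cont'
  refine hcompact.isBounded.subset (iUnion₂_subset ?_)
  rintro z hz _ ⟨θ, rfl⟩
  obtain ⟨s, hsθ, hsz⟩ :=
    exists_lt_apply_mem_of_mem_alphaLim (hz.2.ge (mem_singleton 0))
      (closedBall_mem_nhds (0 : ℝ × ℝ) one_pos) θ
  refine hΦ.toFlow.mem_image_Icc_prod_of_apply_mem isClosed_closedBall hT (sub_nonpos.2 hsθ.le) ?_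
  show Φ (s - θ) (Φ θ z) ∈ closedBall 0 1
  rwa [← hΦ.2.2, sub_add_cancel]
end
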